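/- arXiv:2103.12493 — 3 statements merged into one kernel-verified Lean document; each statement's English description precedes it below -/
import Mathlib

section
/- Let r > s ≥ 1 be integers and let e, f be integers (degrees) such that e/s > f/r (as rationals). Then e/s - f/r ≥ gcd(r, f)/(r·(r-1)). -/
/-!
Clearing denominators, `e/s - f/r = (e r - f s) / (s r)`. The numerator is a positive multiple
of `gcd(r, f)`, and `s r ≤ r (r - 1)` because `s ≤ r - 1`.
-/

theorem Int.gcd_le_mul_sub_mul {r s e f : ℤ} (h : f * s < e * r) :
    (Int.gcd r f : ℤ) ≤ e * r - f * s :=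
  Int.le_of_dvd (by omega) <|
    dvd_sub ((Int.gcd_dvd_left r f).mul_left e) ((Int.gcd_dvd_right r f).mul_right s)

theorem gcd_div_mul_le_div_sub_div {r s e f : ℤ} (hs : 0 < s) (hr : 0 < r)
    (h : (f : ℚ) / r < e / s) :
    (Int.gcd r f : ℚ) / (s * r) ≤ e / s - f / r := by
  have hsq : (0 : ℚ) < s := by exact_mod_cast hs
  have hrq : (0 : ℚ) < r := by exact_mod_cast hr
  have hcross : f * s < e * r := by exact_mod_cast (div_lt_div_iff₀ hrq hsq).mp h
  rw [div_sub_div _ _ hsq.ne' hrq.ne', mul_comm (s : ℚ) f]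
  gcongr
  exact_mod_cast Int.gcd_le_mul_sub_mul hcross

/-- Arithmetic gap estimate: if `r > s ≥ 1` and `e/s > f/r` as rationals, then
`e/s - f/r ≥ gcd(r, f) / (r·(r-1))`. -/
theorem slope_gap_estimate (r s e f : ℤ) (hs : 1 ≤ s) (hsr : s < r)
    (h : (e : ℚ) / (s : ℚ) > (f : ℚ) / (r : ℚ)) :
    (e : ℚ) / (s : ℚ) - (f : ℚ) / (r : ℚ) ≥ (Int.gcd r f : ℚ) / ((r : ℚ) * ((r : ℚ) - 1)) := by
  have hsq : (0 : ℚ) < s := by exact_mod_cast hs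
  have hrq : (0 : ℚ) < r := by exact_mod_cast (zero_lt_one.trans_le hs).trans hsr
  have hs_le : (s : ℚ) ≤ r - 1 := by exact_mod_cast Int.le_sub_one_of_lt hsr
  calc (Int.gcd r f : ℚ) / (r * (r - 1))
      ≤ (Int.gcd r f : ℚ) / (s * r) :=
        div_le_div_of_nonneg_left (by positivity) (by positivity) (by nlinarith)
    _ ≤ e / s - f / r := gcd_div_mul_le_div_sub_div (by omega) (by omega) h
end

section
/- Let 0 → E → F → G → 0 be a short exact sequence of finite-dimensional vector spaces over a field of characteristic 0, with φ : F → G the surjection. Then Sym^n E is (canonically isomorphic to) the kernel of the map Sym^n F → Sym^{n-1} F ⊗ G sending f₁⋯fₙ to Σᵢ f₁⋯f̂ᵢ⋯fₙ ⊗ φ(fᵢ). -/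
open TensorProduct PiTensorProduct

variable (K : Type*) [Field K]

/-- The submodule of the `n`-th tensor power of `V` generated by differences of
pure tensors that differ by a permutation of the factors. -/
def symRelations (V : Type*) [AddCommGroup V] [Module K V] (n : ℕ) :
    Submodule K (⨂[K] (_ : Fin n), V) :=
  Submodule.span K
    {x | ∃ (f : Fin n → V) (σ : Equiv.Perm (Fin n)),
      x = tprod K f - tprod K (f ∘ σ)}

/-- The `n`-th symmetric power of a vector space `V`, as the quotient of the
`n`-th tensor power by the permutation relations. -/
def SymPow (V : Type*) [AddCommGroup V] [Module K V] (n : ℕ) :=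
  (⨂[K] (_ : Fin n), V) ⧸ symRelations K V n

noncomputable instance (V : Type*) [AddCommGroup V] [Module K V] (n : ℕ) :
    AddCommGroup (SymPow K V n) :=
  inferInstanceAs (AddCommGroup ((⨂[K] (_ : Fin n), V) ⧸ symRelations K V n))

noncomputable instance (V : Type*) [AddCommGroup V] [Module K V] (n : ℕ) :
    Module K (SymPow K V n) :=
  inferInstanceAs (Module K ((⨂[K] (_ : Fin n), V) ⧸ symRelations K V n))

/-- The product `v₁ ⋯ vₙ` in the `n`-th symmetric power. -/
noncomputable def SymPow.mk (V : Type*) [AddCommGroup V] [Module K V] (n : ℕ) (f : Fin n → V) :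
    SymPow K V n :=
  Submodule.Quotient.mk (tprod K f)

/-!
Split the sequence by a section `s` of `φ`, so that `p = s ∘ φ` is a projection of `F` with kernel
`ψ(E)`. Following `d` by multiplication with `s(-)` gives the Euler operator
`N(f₁⋯fₙ) = Σᵢ f₁⋯p(fᵢ)⋯fₙ`. Monomials whose factors lie in `ker p` or `range p` span `Sym^n F`,
and on them `N` acts by the number `k ≤ n` of factors in `range p`. Hence
`q(N) = (N - 1)⋯(N - n)` maps `Sym^n F` into `Sym^n E`, and if `d x = 0` then
`q(N) x = (-1)ⁿ n! x`, which is invertible in characteristic `0`. Injectivity of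
`Sym^n E → Sym^n F` comes from a retraction of `ψ`.
-/

namespace SymPow

variable {K} {U V W : Type*} [AddCommGroup U] [Module K U] [AddCommGroup V] [Module K V]
  [AddCommGroup W] [Module K W] {n : ℕ}

variable (K V n) in
noncomputable def mkMultilinear : MultilinearMap K (fun _ : Fin n => V) (SymPow K V n) :=
  (symRelations K V n).mkQ.compMultilinearMap (tprod K)

@[simp]
lemma mkMultilinear_apply (f : Fin n → V) : mkMultilinear K V n f = SymPow.mk K V n f := rfl

variable (K V n) in
lemma span_range_mk : Submodule.span K (Set.range (SymPow.mk K V n)) = ⊤ := by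
  have h := congrArg (Submodule.map (symRelations K V n).mkQ) (span_tprod_eq_top (R := K)
    (s := fun _ : Fin n => V))
  rwa [Submodule.map_span, Submodule.map_top, Submodule.range_mkQ, ← Set.range_comp] at h

@[ext]
lemma hom_ext {X : Type*} [AddCommGroup X] [Module K X] {f g : SymPow K V n →ₗ[K] X}
    (h : ∀ v, f (SymPow.mk K V n v) = g (SymPow.mk K V n v)) : f = g :=
  LinearMap.ext_on_range (span_range_mk K V n) h

lemma mk_comp_perm (f : Fin n → V) (σ : Equiv.Perm (Fin n)) :
    SymPow.mk K V n (f ∘ σ) = SymPow.mk K V n f := by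
  refine (Submodule.Quotient.eq _).2 ?_
  rw [← neg_sub]
  exact Submodule.neg_mem _ (Submodule.subset_span ⟨f, σ, rfl⟩)

lemma mk_update_zero (f : Fin n → V) (i : Fin n) :
    SymPow.mk K V n (Function.update f i 0) = 0 :=
  (mkMultilinear K V n).map_update_zero f i

lemma mk_snoc_comp_perm (f : Fin n → V) (v : V) (σ : Equiv.Perm (Fin n)) :
    SymPow.mk K V (n + 1) (Fin.snoc (f ∘ σ) v) = SymPow.mk K V (n + 1) (Fin.snoc f v) := by
  have : (Fin.snoc (f ∘ σ) v : Fin (n + 1) → V) =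
      Fin.snoc f v ∘ finSuccEquivLast.symm.permCongr σ.optionCongr := by
    funext i
    induction i using Fin.lastCases <;> simp
  rw [this, mk_comp_perm]

lemma mk_snoc_comp_succAbove (f : Fin (n + 1) → V) (v : V) (i : Fin (n + 1)) :
    SymPow.mk K V (n + 1) (Fin.snoc (f ∘ i.succAbove) v) =
      SymPow.mk K V (n + 1) (Function.update f i v) := by
  have : (Fin.snoc (f ∘ i.succAbove) v : Fin (n + 1) → V) =
      Function.update f i v ∘ (finSuccEquivLast.trans (finSuccEquiv' i).symm) := by
    funext j
    induction j using Fin.lastCases with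
    | last =>
      rw [Function.comp_apply, Equiv.trans_apply,
        show (finSuccEquivLast (Fin.last n) : Option (Fin n)) = none from finSuccEquivLast_last]
      simp
    | cast j => simp [finSuccEquivLast_castSucc]
  rw [this, mk_comp_perm]

variable (n) in
noncomputable def map (g : V →ₗ[K] W) : SymPow K V n →ₗ[K] SymPow K W n :=
  Submodule.mapQ _ _ (PiTensorProduct.map fun _ => g) <| by
    rw [symRelations, Submodule.span_le]
    rintro x ⟨f, σ, rfl⟩
    simp only [SetLike.mem_coe, Submodule.mem_comap, map_sub, PiTensorProduct.map_tprod]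
    exact Submodule.subset_span ⟨g ∘ f, σ, rfl⟩

@[simp]
lemma map_mk (g : V →ₗ[K] W) (f : Fin n → V) :
    map n g (SymPow.mk K V n f) = SymPow.mk K W n (g ∘ f) := by
  change Submodule.Quotient.mk (PiTensorProduct.map _ (tprod K f)) = _
  rw [PiTensorProduct.map_tprod]
  rfl

lemma map_injective {g : V →ₗ[K] W} (hg : Function.Injective g) :
    Function.Injective (map n g) := by
  obtain ⟨r, hr⟩ := g.exists_leftInverse_of_injective (LinearMap.ker_eq_bot.2 hg)
  have hleft : map n r ∘ₗ map n g = LinearMap.id := by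
    ext f
    simpa [Function.comp_def] using congrArg (SymPow.mk K V n)
      (funext fun j => LinearMap.congr_fun hr (f j))
  exact Function.LeftInverse.injective (LinearMap.congr_fun hleft)

lemma mk_mem_range_map {ψ : U →ₗ[K] V} {f : Fin n → V} (hf : ∀ j, f j ∈ LinearMap.range ψ) :
    SymPow.mk K V n f ∈ LinearMap.range (map n ψ) := by
  choose e he using hf
  exact ⟨SymPow.mk K U n e, by simp [Function.comp_def, he]⟩

variable (K V n) in
noncomputable def mul : SymPow K V n ⊗[K] V →ₗ[K] SymPow K V (n + 1) :=
  TensorProduct.lift <| (symRelations K V n).liftQ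
    (PiTensorProduct.lift (mkMultilinear K V (n + 1)).curryRight) <| by
      rw [symRelations, Submodule.span_le]
      rintro x ⟨f, σ, rfl⟩
      simp only [SetLike.mem_coe, LinearMap.mem_ker, map_sub, PiTensorProduct.lift.tprod,
        sub_eq_zero]
      ext v
      simp [mk_snoc_comp_perm]

lemma mul_tmul (f : Fin n → V) (v : V) :
    mul K V n (SymPow.mk K V n f ⊗ₜ v) = SymPow.mk K V (n + 1) (Fin.snoc f v) := by
  rw [mul]
  erw [TensorProduct.lift.tmul, Submodule.liftQ_apply]
  rw [PiTensorProduct.lift.tprod, MultilinearMap.curryRight_apply]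
  rfl

lemma span_mk_adapted {p : Module.End K V} (hp : IsIdempotentElem p) :
    Submodule.span K {x | ∃ f : Fin n → V, (∀ j, p (f j) = f j ∨ p (f j) = 0) ∧
      x = SymPow.mk K V n f} = ⊤ := by
  classical
  have hpp : ∀ v, p (p v) = p v := LinearMap.congr_fun hp
  rw [eq_top_iff, ← span_range_mk, Submodule.span_le]
  rintro _ ⟨f, rfl⟩
  have hf : f = (fun j => f j - p (f j)) + (fun j => p (f j)) := by ext j; simp
  rw [← mkMultilinear_apply, hf, MultilinearMap.map_add_univ]
  refine Submodule.sum_mem _ fun t _ => Submodule.subset_span ⟨_, fun j => ?_, rfl⟩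
  by_cases hj : j ∈ t
  · simp [Finset.piecewise_eq_of_mem _ _ _ hj, hpp]
  · simp [Finset.piecewise_eq_of_notMem _ _ _ hj, hpp]

section Euler

variable {p : Module.End K V} {N : Module.End K (SymPow K V n)}
  (hN : ∀ f, N (SymPow.mk K V n f) = ∑ i, SymPow.mk K V n (Function.update f i (p (f i))))
include hN

open Classical in
lemma euler_mk_of_adapted {f : Fin n → V} (hf : ∀ j, p (f j) = f j ∨ p (f j) = 0) :
    N (SymPow.mk K V n f) =
      ((Finset.univ.filter fun j => p (f j) ≠ 0).card : K) • SymPow.mk K V n f := by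
  have hterm : ∀ i, SymPow.mk K V n (Function.update f i (p (f i))) =
      if p (f i) ≠ 0 then SymPow.mk K V n f else 0 := by
    intro i
    split_ifs with h
    · rw [(hf i).resolve_right h, Function.update_eq_self]
    · rw [not_not.1 h, mk_update_zero]
  rw [hN, Finset.sum_congr rfl fun i _ => hterm i, Finset.sum_ite, Finset.sum_const,
    Finset.sum_const_zero, add_zero, Nat.cast_smul_eq_nsmul]

open Polynomial in
theorem mem_range_map_of_euler_eq_zero [CharZero K] {ψ : U →ₗ[K] V} (hp : IsIdempotentElem p)
    (hker : LinearMap.ker p ≤ LinearMap.range ψ) {x : SymPow K V n} (hx : N x = 0) :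
    x ∈ LinearMap.range (map n ψ) := by
  classical
  -- `q` vanishes at the eigenvalues `1, …, n` of `N` on adapted monomials, but not at `0`.
  set q : K[X] := ∏ j ∈ Finset.Icc 1 n, (X - C (j : K))
  have hq : ∀ y, aeval N q y ∈ LinearMap.range (map n ψ) := by
    suffices h : ⊤ ≤ (LinearMap.range (map n ψ)).comap (aeval N q) from
      fun y => h Submodule.mem_top
    rw [← span_mk_adapted hp, Submodule.span_le]
    rintro _ ⟨f, hf, rfl⟩
    rw [SetLike.mem_coe, Submodule.mem_comap,
      Module.End.aeval_apply_of_mem_apply_eq_smul (euler_mk_of_adapted hN hf)]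
    set k := (Finset.univ.filter fun j => p (f j) ≠ 0).card with hk
    obtain hk0 | hkpos := Nat.eq_zero_or_pos k
    · refine Submodule.smul_mem _ _ (mk_mem_range_map fun j => hker ?_)
      rw [hk, Finset.card_eq_zero, Finset.filter_eq_empty_iff] at hk0
      simpa using hk0 (Finset.mem_univ j)
    · have hkn : k ≤ n := (Finset.card_filter_le _ _).trans_eq (Finset.card_fin n)
      rw [eval_prod, Finset.prod_eq_zero (Finset.mem_Icc.2 ⟨hkpos, hkn⟩) (by simp), zero_smul]
      exact zero_mem _
  have hq0 : q.eval 0 ≠ 0 := by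
    rw [eval_prod, Finset.prod_ne_zero_iff]
    intro j hj
    have := (Finset.mem_Icc.1 hj).1
    simp only [eval_sub, eval_X, eval_C, zero_sub, neg_ne_zero, Nat.cast_ne_zero]
    omega
  have h := Submodule.smul_mem _ (q.eval 0)⁻¹ (hq x)
  rwa [Module.End.aeval_apply_of_mem_apply_eq_smul (hx.trans (zero_smul K x).symm), smul_smul,
    inv_mul_cancel₀ hq0, one_smul] at h

end Euler

section Contraction

variable {φ : V →ₗ[K] W} {d : SymPow K V (n + 1) →ₗ[K] SymPow K V n ⊗[K] W}
  (hd : ∀ f : Fin (n + 1) → V,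
    d (SymPow.mk K V (n + 1) f) = ∑ i, SymPow.mk K V n (f ∘ i.succAbove) ⊗ₜ[K] φ (f i))
include hd

lemma mul_lTensor_contraction_mk (s : W →ₗ[K] V) (f : Fin (n + 1) → V) :
    mul K V n (s.lTensor _ (d (SymPow.mk K V (n + 1) f))) =
      ∑ i, SymPow.mk K V (n + 1) (Function.update f i (s (φ (f i)))) := by
  simp only [hd, map_sum, LinearMap.lTensor_tmul, mul_tmul, mk_snoc_comp_succAbove]

lemma contraction_comp_map_eq_zero {ψ : U →ₗ[K] V} (hψφ : φ ∘ₗ ψ = 0) :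
    d ∘ₗ map (n + 1) ψ = 0 := by
  ext f
  simp [hd, ← LinearMap.comp_apply φ ψ, hψφ]

end Contraction

end SymPow

theorem symPow_kernel_description [CharZero K]
    (E F G : Type*) [AddCommGroup E] [Module K E] [AddCommGroup F] [Module K F]
    [AddCommGroup G] [Module K G]
    (ψ : E →ₗ[K] F) (φ : F →ₗ[K] G)
    (hinj : Function.Injective ψ) (hsurj : Function.Surjective φ)
    (hexact : LinearMap.range ψ = LinearMap.ker φ)
    (n : ℕ)
    (Smap : SymPow K E (n + 1) →ₗ[K] SymPow K F (n + 1))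
    (hSmap : ∀ f : Fin (n + 1) → E, Smap (SymPow.mk K E (n + 1) f) = SymPow.mk K F (n + 1) (ψ ∘ f))
    (d : SymPow K F (n + 1) →ₗ[K] (SymPow K F n ⊗[K] G))
    (hd : ∀ f : Fin (n + 1) → F,
      d (SymPow.mk K F (n + 1) f) =
        ∑ i : Fin (n + 1), SymPow.mk K F n (f ∘ i.succAbove) ⊗ₜ[K] φ (f i)) :
    LinearMap.range Smap = LinearMap.ker d ∧ Function.Injective Smap := by
  obtain rfl : Smap = SymPow.map (n + 1) ψ := SymPow.hom_ext fun f => by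
    rw [hSmap, SymPow.map_mk]
  refine ⟨le_antisymm ?_ ?_, SymPow.map_injective hinj⟩
  · rintro _ ⟨y, rfl⟩
    have hψφ : φ ∘ₗ ψ = 0 := LinearMap.range_le_ker_iff.1 hexact.le
    exact LinearMap.congr_fun (SymPow.contraction_comp_map_eq_zero hd hψφ) y
  · intro x hx
    obtain ⟨s, hs⟩ := φ.exists_rightInverse_of_surjective (LinearMap.range_eq_top.2 hsurj)
    have hsφ : IsIdempotentElem (s ∘ₗ φ) := by
      ext v
      simp [← LinearMap.comp_apply φ s, hs]
    have hker : LinearMap.ker (s ∘ₗ φ) ≤ LinearMap.range ψ := by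
      rw [LinearMap.ker_comp_of_ker_eq_bot _ (LinearMap.ker_eq_bot_of_inverse hs), hexact]
    refine SymPow.mem_range_map_of_euler_eq_zero (p := s ∘ₗ φ)
      (N := SymPow.mul K F n ∘ₗ s.lTensor _ ∘ₗ d) (SymPow.mul_lTensor_contraction_mk hd s)
      hsφ hker ?_
    rw [LinearMap.comp_apply, LinearMap.comp_apply, LinearMap.mem_ker.1 hx, map_zero, map_zero]
end

section
/- Let g ≥ 0, D ≥ 1, n ≥ 1 be integers, p a prime, and e a natural number with p^e ≥ (g-1+D)·n + 1. Let μ, μ' be rationals with μ' - μ ≥ 1/n and set k = ⌈-p^e·μ/D⌉ - 1. Then p^e·μ' + k·D > g - 1. -/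
/-- Slope estimate in the positive characteristic (Frobenius pullback) version of the
semistability criterion: if `p^e ≥ (g-1+D)·n + 1`, `μ' - μ ≥ 1/n` and
`k = ⌈-p^e·μ/D⌉ - 1`, then `p^e·μ' + k·D > g - 1`. -/
theorem frobenius_destabilizing_slope_bound (g D n : ℤ) (p : ℕ) (hp : p.Prime) (e : ℕ)
    (μ μ' : ℚ) (hg : 0 ≤ g) (hD : 1 ≤ D) (hn : 1 ≤ n)
    (hpe : ((p : ℤ) ^ e : ℤ) ≥ (g - 1 + D) * n + 1)
    (hgap : μ' - μ ≥ 1 / (n : ℚ))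
    (k : ℤ) (hk : k = ⌈-(((p : ℚ) ^ e) * μ) / (D : ℚ)⌉ - 1) :
    ((p : ℚ) ^ e) * μ' + (k : ℚ) * (D : ℚ) > (g : ℚ) - 1 := by
  set P : ℚ := (p : ℚ) ^ e with hP
  have hD' : (0 : ℚ) < (D : ℚ) := by exact_mod_cast lt_of_lt_of_le one_pos hD
  have hn' : (0 : ℚ) < (n : ℚ) := by exact_mod_cast lt_of_lt_of_le one_pos hn
  have hg' : (0 : ℚ) ≤ (g : ℚ) := by exact_mod_cast hg
  have hDQ : (1 : ℚ) ≤ (D : ℚ) := by exact_mod_cast hD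
  have hceil : -(P * μ) / (D : ℚ) ≤ (⌈-(P * μ) / (D : ℚ)⌉ : ℚ) := Int.le_ceil _
  have hkQ : -(P * μ) / (D : ℚ) - 1 ≤ (k : ℚ) := by
    have : ((k : ℚ)) = ((⌈-(P * μ) / (D : ℚ)⌉ : ℤ) : ℚ) - 1 := by
      rw [hk]; push_cast; ring
    rw [this]; linarith
  have hkD : (k : ℚ) * (D : ℚ) ≥ -(P * μ) - (D : ℚ) := by
    have h := mul_le_mul_of_nonneg_right hkQ (le_of_lt hD')
    have hdiv : (-(P * μ) / (D : ℚ)) * (D : ℚ) = -(P * μ) := by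
      field_simp
    nlinarith [h]
  have hPe : P ≥ ((g : ℚ) - 1 + (D : ℚ)) * (n : ℚ) + 1 := by
    have h2 : ((((p : ℤ) ^ e : ℤ)) : ℚ) ≥ (((g - 1 + D) * n + 1 : ℤ) : ℚ) := by
      exact_mod_cast hpe
    push_cast at h2
    linarith
  have hPpos : 0 < P := by
    have h0 : (0 : ℚ) ≤ ((g : ℚ) - 1 + (D : ℚ)) * (n : ℚ) :=
      mul_nonneg (by linarith) (by linarith)
    linarith
  have hgap' : (1 : ℚ) ≤ (n : ℚ) * (μ' - μ) := (div_le_iff₀' hn').mp hgap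
  have key : (n : ℚ) * (P * (μ' - μ)) ≥ P := by nlinarith
  have key2 : P * (μ' - μ) > (g : ℚ) - 1 + (D : ℚ) := by
    by_contra hcon
    push_neg at hcon
    have : (n : ℚ) * (P * (μ' - μ)) ≤ ((g : ℚ) - 1 + (D : ℚ)) * (n : ℚ) := by
      nlinarith
    linarith
  nlinarith [hkD, key2]
end
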